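/- Let V be a finite-dimensional 𝔽₂-vector space. There is a unique linear endomorphism Π of Λ²(P̄(V)) satisfying Π([u] ∧ [v]) = ([u] + [v]) ∧ [u + v] for all u, v ∈ V, and Π is a projector: Π ∘ Π = Π. -/

import Mathlib

open scoped TensorProduct

set_option maxHeartbeats 1000000
set_option synthInstance.maxHeartbeats 400000

noncomputable section

abbrev F2 := ZMod 2

/-- The wedge `x₁ ∧ ⋯ ∧ xₙ` of a family of vectors, as an element of the `n`-th exterior
power `⋀[𝔽₂]^n M`. -/
def wedge {M : Type*} [AddCommGroup M] [Module F2 M] (n : ℕ) (x : Fin n → M) :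
    ⋀[F2]^n M :=
  ⟨ExteriorAlgebra.ιMulti F2 n x,
    ExteriorAlgebra.ιMulti_range F2 n (Set.mem_range_self x)⟩

/-- `P̄(V)`: the quotient of the free `𝔽₂`-vector space on the set `V` by the line
spanned by the basis vector `[0]`. -/
abbrev Pbar (V : Type*) [AddCommGroup V] [Module F2 V] :=
  (V →₀ F2) ⧸ (Submodule.span F2 {Finsupp.single (0 : V) (1 : F2)})

/-- The class `[v]` of a vector `v ∈ V` in `P̄(V)`. -/
def cls {V : Type*} [AddCommGroup V] [Module F2 V] (v : V) : Pbar V :=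
  Submodule.Quotient.mk (Finsupp.single v 1)

section Helpers

variable {M : Type*} [AddCommGroup M] [Module F2 M]

lemma upd0 (x y a : M) : Function.update ![x, y] 0 a = ![a, y] := by
  funext i
  fin_cases i <;> simp [Function.update]

lemma upd1 (x y a : M) : Function.update ![x, y] 1 a = ![x, a] := by
  funext i
  fin_cases i <;> simp [Function.update]

lemma add_self_f2 (a : M) : a + a = 0 := by
  rw [← two_smul F2 a, show (2 : F2) = 0 from rfl, zero_smul]

lemma wedge_add_left (x x' y : M) :
    wedge 2 ![x + x', y] = wedge 2 ![x, y] + wedge 2 ![x', y] := by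
  apply Subtype.ext
  have := (ExteriorAlgebra.ιMulti F2 2 (M := M)).map_update_add ![x, y] 0 x x'
  simp only [upd0] at this
  exact this

lemma wedge_add_right (x y y' : M) :
    wedge 2 ![x, y + y'] = wedge 2 ![x, y] + wedge 2 ![x, y'] := by
  apply Subtype.ext
  have := (ExteriorAlgebra.ιMulti F2 2 (M := M)).map_update_add ![x, y] 1 y y'
  simp only [upd1] at this
  exact this

lemma wedge_smul_left (c : F2) (x y : M) :
    wedge 2 ![c • x, y] = c • wedge 2 ![x, y] := by
  apply Subtype.ext
  have := (ExteriorAlgebra.ιMulti F2 2 (M := M)).map_update_smul ![x, y] 0 c x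
  simp only [upd0] at this
  exact this

lemma wedge_smul_right (c : F2) (x y : M) :
    wedge 2 ![x, c • y] = c • wedge 2 ![x, y] := by
  apply Subtype.ext
  have := (ExteriorAlgebra.ιMulti F2 2 (M := M)).map_update_smul ![x, y] 1 c y
  simp only [upd1] at this
  exact this

lemma wedge_same (x : M) : wedge 2 ![x, x] = 0 := by
  apply Subtype.ext
  have := (ExteriorAlgebra.ιMulti F2 2 (M := M)).map_eq_zero_of_eq ![x, x]
    (i := 0) (j := 1) (by simp) (by decide)
  exact this

lemma wedge_zero_left (y : M) : wedge 2 ![(0 : M), y] = 0 := by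
  have := wedge_smul_left (0 : F2) (0 : M) y
  simpa using this

lemma wedge_zero_right (x : M) : wedge 2 ![x, (0 : M)] = 0 := by
  have := wedge_smul_right (0 : F2) x (0 : M)
  simpa using this

lemma wedge_swap (x y : M) : wedge 2 ![x, y] = wedge 2 ![y, x] := by
  have h0 : wedge 2 ![x + y, x + y] = 0 := wedge_same _
  rw [wedge_add_left, wedge_add_right, wedge_add_right, wedge_same, wedge_same,
    zero_add, add_zero] at h0
  have := congrArg (· + wedge 2 ![y, x]) h0
  simpa [add_assoc, add_self_f2] using this

end Helpers

section Main

variable {V : Type*} [AddCommGroup V] [Module F2 V]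

def b0 (u v : V) : ⋀[F2]^2 (Pbar V) := wedge 2 ![cls u + cls v, cls (u + v)]

lemma cls_zero : cls (0 : V) = 0 := by
  rw [cls, Submodule.Quotient.mk_eq_zero]
  exact Submodule.mem_span_singleton_self _

lemma b0_zero_left (v : V) : b0 0 v = 0 := by
  rw [b0, cls_zero, zero_add, zero_add, wedge_same]

lemma b0_zero_right (u : V) : b0 u 0 = 0 := by
  rw [b0, cls_zero, add_zero, add_zero, wedge_same]

def innerB (u : V) : (V →₀ F2) →ₗ[F2] ⋀[F2]^2 (Pbar V) :=
  Finsupp.lsum F2 fun v => LinearMap.toSpanSingleton F2 _ (b0 u v)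

lemma innerB_single (u v : V) (c : F2) :
    innerB u (Finsupp.single v c) = c • b0 u v := by
  simp [innerB, Finsupp.lsum_single, LinearMap.toSpanSingleton_apply]

def B1 : (V →₀ F2) →ₗ[F2] ((V →₀ F2) →ₗ[F2] ⋀[F2]^2 (Pbar V)) :=
  Finsupp.lsum F2 fun u => LinearMap.toSpanSingleton F2 _ (innerB u)

lemma B1_single (u : V) (c : F2) :
    B1 (Finsupp.single u c) = c • innerB u := by
  simp [B1, Finsupp.lsum_single, LinearMap.toSpanSingleton_apply]

lemma innerB_zero : innerB (0 : V) = 0 := by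
  apply Finsupp.lhom_ext
  intro a b
  simp [innerB_single, b0_zero_left]

lemma B1_le_ker :
    Submodule.span F2 {Finsupp.single (0 : V) (1 : F2)} ≤ LinearMap.ker B1 := by
  rw [Submodule.span_le]
  intro x hx
  rw [Set.mem_singleton_iff] at hx
  subst hx
  rw [SetLike.mem_coe, LinearMap.mem_ker, B1_single, innerB_zero, smul_zero]

def B1q : Pbar V →ₗ[F2] ((V →₀ F2) →ₗ[F2] ⋀[F2]^2 (Pbar V)) :=
  Submodule.liftQ _ B1 B1_le_ker

lemma B1q_cls (u : V) : B1q (cls u) = innerB u := by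
  rw [cls, B1q, Submodule.liftQ_apply, B1_single, one_smul]

lemma pbar_hom_ext {P : Type*} [AddCommGroup P] [Module F2 P]
    {f g : Pbar V →ₗ[F2] P} (h : ∀ u, f (cls u) = g (cls u)) : f = g := by
  apply Submodule.linearMap_qext
  apply Finsupp.lhom_ext
  intro a b
  have hs : Finsupp.single a b = b • Finsupp.single a (1 : F2) := by
    rw [Finsupp.smul_single, smul_eq_mul, mul_one]
  simp only [LinearMap.comp_apply, Submodule.mkQ_apply, hs, map_smul]
  exact congrArg (b • ·) (h a)

lemma B1q_single_zero (x : Pbar V) : B1q x (Finsupp.single (0 : V) (1 : F2)) = 0 := by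
  have : (LinearMap.applyₗ (Finsupp.single (0 : V) (1 : F2))).comp B1q
      = (0 : Pbar V →ₗ[F2] ⋀[F2]^2 (Pbar V)) := by
    apply pbar_hom_ext
    intro u
    show B1q (cls u) (Finsupp.single (0 : V) (1 : F2)) = 0
    simp [LinearMap.applyₗ, B1q_cls, innerB_single, b0_zero_right]
  exact congrFun (congrArg DFunLike.coe this) x

def B2 : Pbar V →ₗ[F2] Pbar V →ₗ[F2] ⋀[F2]^2 (Pbar V) where
  toFun x := Submodule.liftQ _ (B1q x) (by
    rw [Submodule.span_le]
    intro a ha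
    rw [Set.mem_singleton_iff] at ha
    subst ha
    rw [SetLike.mem_coe, LinearMap.mem_ker, B1q_single_zero])
  map_add' x y := by
    apply Submodule.linearMap_qext
    apply LinearMap.ext
    intro a
    simp
  map_smul' c x := by
    apply Submodule.linearMap_qext
    apply LinearMap.ext
    intro a
    simp

lemma B2_cls (u v : V) : B2 (cls u) (cls v) = b0 u v := by
  show Submodule.liftQ _ (B1q (cls u)) _ (Submodule.Quotient.mk (Finsupp.single v 1)) = _
  rw [Submodule.liftQ_apply, B1q_cls, innerB_single, one_smul]

lemma B2_symm (x y : Pbar V) : B2 x y = B2 y x := by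
  have : B2 (V := V) = (B2 (V := V)).flip := by
    apply pbar_hom_ext
    intro u
    apply pbar_hom_ext
    intro v
    rw [B2_cls, LinearMap.flip_apply, B2_cls, b0, b0, add_comm (cls v), add_comm v]
  exact congrFun (congrArg (fun f => DFunLike.coe (f x)) this) y

lemma span_cls : Submodule.span F2 (Set.range (cls (V := V))) = ⊤ := by
  rw [Submodule.eq_top_iff']
  intro x
  obtain ⟨f, rfl⟩ := Submodule.Quotient.mk_surjective _ x
  induction f using Finsupp.induction with
  | zero => simpa using Submodule.zero_mem _
  | single_add a b f _ _ ih =>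
    rw [Submodule.Quotient.mk_add]
    refine Submodule.add_mem _ ?_ ih
    have hs : Finsupp.single a b = b • Finsupp.single a (1 : F2) := by
      rw [Finsupp.smul_single, smul_eq_mul, mul_one]
    rw [hs, Submodule.Quotient.mk_smul]
    exact Submodule.smul_mem _ _ (Submodule.subset_span ⟨a, rfl⟩)

lemma mem_span_cls (x : Pbar V) : x ∈ Submodule.span F2 (Set.range (cls (V := V))) := by
  rw [span_cls]; trivial

lemma B2_diag (x : Pbar V) : B2 x x = 0 := by
  refine Submodule.span_induction (p := fun x _ => B2 x x = 0) ?_ ?_ ?_ ?_ (mem_span_cls x)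
  · rintro _ ⟨u, rfl⟩
    rw [B2_cls, b0, add_self_f2, add_self_f2, wedge_zero_left]
  · simp
  · intro a b _ _ iha ihb
    simp only [map_add, LinearMap.add_apply, iha, ihb, zero_add, add_zero]
    rw [B2_symm b a, add_self_f2]
  · intro c a _ ih
    simp only [map_smul, LinearMap.smul_apply, ih, smul_zero]

def A : Pbar V [⋀^Fin 2]→ₗ[F2] ⋀[F2]^2 (Pbar V) where
  toFun m := B2 (m 0) (m 1)
  map_update_add' m i x y := by
    fin_cases i <;>
      simp [Function.update_apply, Fin.ext_iff]
  map_update_smul' m i c x := by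
    fin_cases i <;>
      simp [Function.update_apply, Fin.ext_iff, map_smul, LinearMap.smul_apply]
  map_eq_zero_of_eq' m i j h hij := by
    have h2 : B2 (m 0) (m 1) = 0 := by
      fin_cases i <;> fin_cases j
      · exact absurd rfl hij
      · rw [show m 0 = m 1 from h]; exact B2_diag _
      · rw [show m 1 = m 0 from h]; exact B2_diag _
      · exact absurd rfl hij
    exact h2

lemma A_apply (m : Fin 2 → Pbar V) : A m = B2 (m 0) (m 1) := rfl

def PiMap : (⋀[F2]^2 (Pbar V)) →ₗ[F2] ⋀[F2]^2 (Pbar V) :=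
  (ExteriorAlgebra.liftAlternating
    (fun i => match i with
      | 2 => A (V := V)
      | _ => 0)) ∘ₗ (⋀[F2]^2 (Pbar V)).subtype

lemma PiMap_wedge (x : Fin 2 → Pbar V) : PiMap (wedge 2 x) = B2 (x 0) (x 1) := by
  show ExteriorAlgebra.liftAlternating _ (ExteriorAlgebra.ιMulti F2 2 x) = _
  rw [ExteriorAlgebra.liftAlternating_apply_ιMulti]
  rfl

lemma PiMap_prop (u v : V) :
    PiMap (wedge 2 ![cls u, cls v]) = wedge 2 ![cls u + cls v, cls (u + v)] := by
  rw [PiMap_wedge]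
  simp only [Matrix.cons_val_zero, Matrix.cons_val_one, Matrix.head_cons]
  rw [B2_cls, b0]

end Main

section Ext

variable {V : Type*} [AddCommGroup V] [Module F2 V]

lemma ext_wedge {L L' : (⋀[F2]^2 (Pbar V)) →ₗ[F2] ⋀[F2]^2 (Pbar V)}
    (h : ∀ x y : Pbar V, L (wedge 2 ![x, y]) = L' (wedge 2 ![x, y])) : L = L' := by
  apply LinearMap.ext
  rintro ⟨z, hz⟩
  have hz' : z ∈ Submodule.span F2
      (Set.range (ExteriorAlgebra.ιMulti F2 2 (M := Pbar V))) := by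
    rw [ExteriorAlgebra.ιMulti_span_fixedDegree]; exact hz
  refine Submodule.span_induction
    (p := fun z _ => ∀ (hm : z ∈ ⋀[F2]^2 (Pbar V)), L ⟨z, hm⟩ = L' ⟨z, hm⟩)
    ?_ ?_ ?_ ?_ hz' hz
  · rintro _ ⟨v, rfl⟩ hm
    have hv : (⟨ExteriorAlgebra.ιMulti F2 2 v, hm⟩ : ⋀[F2]^2 (Pbar V)) = wedge 2 v :=
      Subtype.ext rfl
    have hv2 : ![v 0, v 1] = v := by
      funext i; fin_cases i <;> rfl
    rw [hv, ← hv2]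
    exact h (v 0) (v 1)
  · intro hm
    have : (⟨0, hm⟩ : ⋀[F2]^2 (Pbar V)) = 0 := rfl
    rw [this, map_zero, map_zero]
  · intro a b ha hb iha ihb hm
    have ha' : a ∈ ⋀[F2]^2 (Pbar V) := by
      rw [← ExteriorAlgebra.ιMulti_span_fixedDegree]; exact ha
    have hb' : b ∈ ⋀[F2]^2 (Pbar V) := by
      rw [← ExteriorAlgebra.ιMulti_span_fixedDegree]; exact hb
    have : (⟨a + b, hm⟩ : ⋀[F2]^2 (Pbar V)) = ⟨a, ha'⟩ + ⟨b, hb'⟩ := rfl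
    rw [this, map_add, map_add, iha ha', ihb hb']
  · intro c a ha ih hm
    have ha' : a ∈ ⋀[F2]^2 (Pbar V) := by
      rw [← ExteriorAlgebra.ιMulti_span_fixedDegree]; exact ha
    have : (⟨c • a, hm⟩ : ⋀[F2]^2 (Pbar V)) = c • ⟨a, ha'⟩ := rfl
    rw [this, map_smul, map_smul, ih ha']

lemma ext_cls {L L' : (⋀[F2]^2 (Pbar V)) →ₗ[F2] ⋀[F2]^2 (Pbar V)}
    (h : ∀ u v : V, L (wedge 2 ![cls u, cls v]) = L' (wedge 2 ![cls u, cls v])) :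
    L = L' := by
  apply ext_wedge
  intro x y
  have key : ∀ (u : V) (y : Pbar V),
      L (wedge 2 ![cls u, y]) = L' (wedge 2 ![cls u, y]) := by
    intro u y
    refine Submodule.span_induction
      (p := fun y _ => L (wedge 2 ![cls u, y]) = L' (wedge 2 ![cls u, y]))
      ?_ ?_ ?_ ?_ (mem_span_cls y)
    · rintro _ ⟨v, rfl⟩; exact h u v
    · show L (wedge 2 ![cls u, 0]) = L' (wedge 2 ![cls u, 0])
      rw [wedge_zero_right, map_zero, map_zero]
    · intro a b _ _ iha ihb
      rw [wedge_add_right, map_add, map_add, iha, ihb]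
    · intro c a _ ih
      rw [wedge_smul_right, map_smul, map_smul, ih]
  refine Submodule.span_induction
    (p := fun x _ => L (wedge 2 ![x, y]) = L' (wedge 2 ![x, y]))
    ?_ ?_ ?_ ?_ (mem_span_cls x)
  · rintro _ ⟨u, rfl⟩; exact key u y
  · show L (wedge 2 ![(0 : Pbar V), y]) = L' (wedge 2 ![(0 : Pbar V), y])
    rw [wedge_zero_left, map_zero, map_zero]
  · intro a b _ _ iha ihb
    rw [wedge_add_left, map_add, map_add, iha, ihb]
  · intro c a _ ih
    rw [wedge_smul_left, map_smul, map_smul, ih]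

end Ext


/-- There is a unique linear endomorphism `Π` of `Λ²(P̄(V))` with
`Π([u] ∧ [v]) = ([u] + [v]) ∧ [u + v]` for all `u, v ∈ V`, and it is a projector. -/
theorem exists_unique_projector
    (V : Type*) [AddCommGroup V] [Module F2 V] [Module.Finite F2 V] :
    (∃! Pi : (⋀[F2]^2 (Pbar V)) →ₗ[F2] (⋀[F2]^2 (Pbar V)),
      ∀ u v : V,
        Pi (wedge 2 ![cls u, cls v]) = wedge 2 ![cls u + cls v, cls (u + v)]) ∧
    ∀ Pi : (⋀[F2]^2 (Pbar V)) →ₗ[F2] (⋀[F2]^2 (Pbar V)),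
      (∀ u v : V,
        Pi (wedge 2 ![cls u, cls v]) = wedge 2 ![cls u + cls v, cls (u + v)]) →
      Pi ∘ₗ Pi = Pi := by
  constructor
  · exact ⟨PiMap, PiMap_prop, fun Q hQ => ext_cls fun u v => by rw [hQ, PiMap_prop]⟩
  · intro Pi hPi
    apply ext_cls
    intro u v
    show Pi (Pi (wedge 2 ![cls u, cls v])) = Pi (wedge 2 ![cls u, cls v])
    rw [hPi u v, wedge_add_left, map_add, hPi u (u + v), hPi v (u + v)]
    have h1 : u + (u + v) = v := by rw [← add_assoc, add_self_f2, zero_add]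
    have h2 : v + (u + v) = u := by rw [add_comm u v, ← add_assoc, add_self_f2, zero_add]
    rw [h1, h2, wedge_add_left, wedge_add_left, wedge_swap (cls v) (cls u),
      wedge_swap (cls u) (cls (u + v)), wedge_swap (cls v) (cls (u + v))]
    generalize wedge 2 ![cls u, cls v] = A
    generalize wedge 2 ![cls (u + v), cls v] = B
    generalize wedge 2 ![cls (u + v), cls u] = C
    rw [show A + B + (A + C) = (A + A) + (B + C) by abel, add_self_f2, zero_add,
      add_comm B C]

end
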